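/- Consider the approximate DPP iteration with parameter η > 0 started from Ψ_0 with ‖Ψ_0‖ ≤ V_max, with error functions ε_k and accumulated errors E_k = Σ_{j=0}^k ε_j, and suppose the sequence ‖E_k‖/(k+1) is bounded with ε̄ = limsup_{k→∞} ‖E_k‖/(k+1). Then limsup_{k→∞} ‖Q* − Q^{π_k}‖ ≤ (2γ/(1−γ)²) ε̄, where π_k is the policy induced at round k. -/

import Mathlib

open Finset Real Filter

variable {X A : Type*}

/-- `(πQ)(x) = Σ_a π(a|x) Q(x,a)`. -/
noncomputable def polApply [Fintype A] (pol : X → A → ℝ) (Q : X → A → ℝ) : X → ℝ :=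
  fun x => ∑ a, pol x a * Q x a

/-- Bellman operator `T^π`. -/
noncomputable def bellman [Fintype X] [Fintype A]
    (P : X → A → X → ℝ) (r : X → A → ℝ) (γ : ℝ) (pol : X → A → ℝ)
    (Q : X → A → ℝ) : X → A → ℝ :=
  fun x a => r x a + γ * ∑ x', ∑ a', P x a x' * pol x' a' * Q x' a'

/-- Bellman optimality operator `T`. -/
noncomputable def bellmanOpt [Fintype X] [Fintype A] [Nonempty A]
    (P : X → A → X → ℝ) (r : X → A → ℝ) (γ : ℝ) (Q : X → A → ℝ) : X → A → ℝ :=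
  fun x a => r x a + γ * ∑ x', P x a x' * (Finset.univ.sup' Finset.univ_nonempty (Q x'))

/-- Soft-max policy associated with action preferences `Ψ` at inverse temperature `η`. -/
noncomputable def softmaxPol [Fintype A] (η : ℝ) (Ψ : X → A → ℝ) : X → A → ℝ :=
  fun x a => Real.exp (η * Ψ x a) / ∑ a', Real.exp (η * Ψ x a')

/-- Supremum norm over state-action pairs. -/
noncomputable def supNorm [Fintype X] [Fintype A] [Nonempty X] [Nonempty A]
    (Q : X → A → ℝ) : ℝ :=
  Finset.univ.sup' Finset.univ_nonempty (fun p : X × A => |Q p.1 p.2|)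

/-!
Write `S k = ∑_{j ≤ k} π_j Ψ_j` and `V* x = max_a Q* x a`. Unrolling the recursion gives
`Ψ_{k+1} = Ψ_0 + E_k + (k+1) r + γ P S_k - S_k`, and since `(k+1) Q* = (k+1) r + γ P ((k+1) V*)`,
`Ψ_{k+1}(x, ·)` differs from `(k+1) Q*(x, ·) - S_k x` by at most
`‖Ψ_0‖ + ‖E_k‖ + γ ‖S_k - (k+1) V*‖`. Soft-max averages lie within `|A| / η` of the maximum, so
the deviation `‖S_k - (k+1) V*‖` obeys a `γ`-contraction driven by `‖E_k‖ + O(1)` and grows at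
most like `k ε̄ / (1 - γ)`. The same comparison shows that `π_{k+1}` is greedy for `Q*` up to
`(2 ‖E_k‖ + 2γ ‖S_k - (k+1) V*‖ + O(1)) / (k+1)`, and a greedy gap `δ` costs at most
`γ δ / (1 - γ)` in `‖Q* - Q^π‖`.
-/

open Topology

section Simplex

variable {ι : Type*} [Fintype ι]

lemma abs_sum_mul_le_of_mem_stdSimplex {w : ι → ℝ} (hw : w ∈ stdSimplex ℝ ι) {f : ι → ℝ}
    {m : ℝ} (hf : ∀ i, |f i| ≤ m) : |∑ i, w i * f i| ≤ m :=
  calc |∑ i, w i * f i| ≤ ∑ i, w i * m :=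
        (abs_sum_le_sum_abs _ _).trans <| sum_le_sum fun i _ => by
          rw [abs_mul, abs_of_nonneg (hw.1 i)]
          exact mul_le_mul_of_nonneg_left (hf i) (hw.1 i)
    _ = m := by rw [← sum_mul, hw.2, one_mul]

lemma sum_mul_mul_sub_of_mem_stdSimplex {w : ι → ℝ} (hw : w ∈ stdSimplex ℝ ι) (n : ℝ)
    (g : ι → ℝ) (c : ℝ) : ∑ i, w i * (n * g i - c) = n * ∑ i, w i * g i - c := by
  simp only [mul_sub, sum_sub_distrib, ← sum_mul, hw.2, one_mul, mul_sum, mul_left_comm]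

variable [Nonempty ι]

lemma sum_mul_le_sup'_of_mem_stdSimplex {w : ι → ℝ} (hw : w ∈ stdSimplex ℝ ι) (f : ι → ℝ) :
    ∑ i, w i * f i ≤ univ.sup' univ_nonempty f :=
  calc ∑ i, w i * f i ≤ ∑ i, w i * univ.sup' univ_nonempty f :=
        sum_le_sum fun i _ => mul_le_mul_of_nonneg_left (le_sup' f (mem_univ i)) (hw.1 i)
    _ = univ.sup' univ_nonempty f := by rw [← sum_mul, hw.2, one_mul]

lemma abs_sup'_sub_sup'_le {f g : ι → ℝ} {ε : ℝ} (h : ∀ i, |f i - g i| ≤ ε) :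
    |univ.sup' univ_nonempty f - univ.sup' univ_nonempty g| ≤ ε := by
  refine abs_sub_le_iff.2 ⟨?_, ?_⟩ <;> rw [sub_le_iff_le_add] <;>
    refine sup'_le _ _ fun i _ => ?_
  · linarith [(abs_le.1 (h i)).2, le_sup' g (mem_univ i)]
  · linarith [(abs_le.1 (h i)).1, le_sup' f (mem_univ i)]

lemma sup'_mul_sub {n : ℝ} (hn : 0 ≤ n) (g : ι → ℝ) (c : ℝ) :
    univ.sup' univ_nonempty (fun i => n * g i - c) = n * univ.sup' univ_nonempty g - c := by
  simp_rw [sub_eq_add_neg, ← sup'_add, mul₀_sup' hn]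

end Simplex

section Softmax

variable {ι : Type*} [Fintype ι] [Nonempty ι]

noncomputable def softmax (η : ℝ) (f : ι → ℝ) (i : ι) : ℝ :=
  exp (η * f i) / ∑ j, exp (η * f j)

lemma softmax_mem_stdSimplex (η : ℝ) (f : ι → ℝ) : softmax η f ∈ stdSimplex ℝ ι := by
  have hZ : 0 < ∑ j, exp (η * f j) := sum_pos (fun _ _ => exp_pos _) univ_nonempty
  exact ⟨fun i => div_nonneg (exp_pos _).le hZ.le, by
    simp only [softmax]; rw [← sum_div, div_self hZ.ne']⟩

lemma sup'_sub_le_sum_softmax_mul {η : ℝ} (hη : 0 < η) (f : ι → ℝ) :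
    univ.sup' univ_nonempty f - Fintype.card ι / η ≤ ∑ i, softmax η f i * f i := by
  set m := univ.sup' univ_nonempty f
  have hZ : exp (η * m) ≤ ∑ j, exp (η * f j) := by
    obtain ⟨i, -, hi⟩ := exists_mem_eq_sup' univ_nonempty f
    rw [show m = f i from hi]
    exact single_le_sum (f := fun j => exp (η * f j)) (fun _ _ => (exp_pos _).le) (mem_univ i)
  -- `t ≤ exp t` at `t = η (m - f i)` bounds each weighted gap by `exp (η m) / ∑ j exp (η f j) ≤ 1`.
  have hgap : ∀ i, softmax η f i * (η * (m - f i)) ≤ 1 := fun i => by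
    calc softmax η f i * (η * (m - f i)) ≤ softmax η f i * exp (η * (m - f i)) :=
          mul_le_mul_of_nonneg_left (by linarith [add_one_le_exp (η * (m - f i))])
            ((softmax_mem_stdSimplex η f).1 i)
      _ = exp (η * m) / ∑ j, exp (η * f j) := by
          rw [softmax, div_mul_eq_mul_div, ← exp_add]; ring_nf
      _ ≤ 1 := div_le_one_of_le₀ hZ (sum_nonneg fun _ _ => (exp_pos _).le)
  have hsum : η * ∑ i, softmax η f i * (m - f i) ≤ Fintype.card ι := by
    rw [mul_sum]
    calc ∑ i, η * (softmax η f i * (m - f i)) ≤ ∑ _i : ι, (1 : ℝ) :=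
          sum_le_sum fun i _ => by linarith [hgap i]
      _ = Fintype.card ι := by simp
  have hsplit : ∑ i, softmax η f i * (m - f i) = m - ∑ i, softmax η f i * f i := by
    simp only [mul_sub, sum_sub_distrib, ← sum_mul, (softmax_mem_stdSimplex η f).2, one_mul]
  rw [sub_le_comm, ← hsplit, div_eq_mul_inv, le_mul_inv_iff₀ hη]
  linarith

variable {η : ℝ} {f g : ι → ℝ} {ε : ℝ}

lemma abs_sum_softmax_mul_sub_sup'_le (hη : 0 < η) (h : ∀ i, |f i - g i| ≤ ε) :
    |∑ i, softmax η f i * f i - univ.sup' univ_nonempty g| ≤ Fintype.card ι / η + ε := by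
  have h₁ := sup'_sub_le_sum_softmax_mul hη f
  have h₂ := sum_mul_le_sup'_of_mem_stdSimplex (softmax_mem_stdSimplex η f) f
  have h₃ := abs_le.1 (abs_sup'_sub_sup'_le h)
  rw [abs_le]; constructor <;> linarith

lemma sup'_sub_le_sum_softmax_mul_of_abs_sub_le (hη : 0 < η) (h : ∀ i, |f i - g i| ≤ ε) :
    univ.sup' univ_nonempty g - (Fintype.card ι / η + 2 * ε) ≤ ∑ i, softmax η f i * g i := by
  have h₁ := sup'_sub_le_sum_softmax_mul hη f
  have h₂ := abs_le.1 (abs_sup'_sub_sup'_le h)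
  have h₃ : |∑ i, softmax η f i * f i - ∑ i, softmax η f i * g i| ≤ ε := by
    rw [← sum_sub_distrib]; simp_rw [← mul_sub]
    exact abs_sum_mul_le_of_mem_stdSimplex (softmax_mem_stdSimplex η f) h
  linarith [(abs_le.1 h₃).2, h₂.1]

end Softmax

section Asymptotics

lemma exists_eventually_le_add_mul_of_le_mul_add {γ C ε : ℝ} {b c : ℕ → ℝ} (hγ0 : 0 ≤ γ)
    (hγ1 : γ < 1) (hb : ∀ k, b (k + 1) ≤ γ * b k + c k) (hc : ∀ᶠ k in atTop, c k ≤ C + ε * k) :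
    ∃ M, ∀ᶠ k in atTop, b k ≤ M + ε / (1 - γ) * k := by
  obtain ⟨N, hN⟩ := eventually_atTop.1 hc
  have hg : 0 < 1 - γ := sub_pos.2 hγ1
  set q := ε / (1 - γ)
  have hq : ε = (1 - γ) * q := by simp only [q]; field_simp
  set M := max (b N - q * N) ((C - q) / (1 - γ))
  have hM : C - q ≤ (1 - γ) * M := (div_le_iff₀' hg).1 (le_max_right _ _)
  refine ⟨M, eventually_atTop.2 ⟨N, fun k hk => ?_⟩⟩
  induction k, hk using Nat.le_induction with
  | base => linarith [le_max_left (b N - q * N) ((C - q) / (1 - γ))]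
  | succ k hk ih =>
    have hγb := mul_le_mul_of_nonneg_left ih hγ0
    have hεk : ε * k = q * k - γ * (q * k) := by rw [hq]; ring
    push_cast
    linarith [hb k, hN k hk]

lemma limsup_le_of_eventually_le_add_div {f : ℕ → ℝ} {L B : ℝ} (hf : ∀ k, 0 ≤ f k)
    (h : ∀ᶠ k : ℕ in atTop, f (k + 1) ≤ L + B / (k + 1)) : limsup f atTop ≤ L := by
  have hlim : Tendsto (fun k : ℕ => L + B / ((k : ℝ) + 1)) atTop (𝓝 L) := by
    simpa [div_eq_mul_inv] using
      tendsto_const_nhds.add (tendsto_one_div_add_atTop_nhds_zero_nat.const_mul B)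
  rw [← limsup_nat_add f 1]
  exact (limsup_le_limsup h (isCoboundedUnder_le_of_le atTop fun k => hf (k + 1))
    hlim.isBoundedUnder_le).trans hlim.limsup_eq.le

lemma le_const_mul_of_forall_gt {a b K : ℝ} (h : ∀ t, b < t → a ≤ K * t) : a ≤ K * b :=
  ge_of_tendsto (((continuous_const_mul K).tendsto b).mono_left nhdsWithin_le_nhds)
    (eventually_nhdsWithin_of_forall (s := Set.Ioi b) h)

lemma limsup_le_of_contraction_of_eventually_le {γ c D ε : ℝ} {f b e : ℕ → ℝ} (hγ0 : 0 ≤ γ)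
    (hγ1 : γ < 1) (hf0 : ∀ k, 0 ≤ f k) (hb : ∀ k, b (k + 1) ≤ γ * b k + (D + e k))
    (hf : ∀ k, (1 - γ) * f (k + 1) ≤ γ * ((c + 2 * (e k + γ * b k)) / (k + 1)))
    (he : ∀ᶠ k : ℕ in atTop, e k ≤ (k + 1) * ε) :
    limsup f atTop ≤ 2 * γ / (1 - γ) ^ 2 * ε := by
  have hg : 0 < 1 - γ := sub_pos.2 hγ1
  obtain ⟨M, hM⟩ := exists_eventually_le_add_mul_of_le_mul_add hγ0 hγ1 hb
    (C := D + ε) (ε := ε) (he.mono fun k hk => by linarith)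
  set q := ε / (1 - γ)
  refine limsup_le_of_eventually_le_add_div hf0 (B := γ / (1 - γ) * (c + 2 * γ * (M - q)))
    ((hM.and he).mono fun k ⟨hbk, hek⟩ => ?_)
  have hn : (0 : ℝ) < k + 1 := by positivity
  have hY : c + 2 * (e k + γ * b k) ≤ c + 2 * γ * (M - q) + (k + 1) * (2 * ε + 2 * γ * q) := by
    linarith [mul_le_mul_of_nonneg_left hbk hγ0]
  have hKε : 2 * γ / (1 - γ) ^ 2 * ε = γ / (1 - γ) * (2 * ε + 2 * γ * q) := by
    simp only [q]; field_simp; ring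
  calc f (k + 1) ≤ γ / (1 - γ) * ((c + 2 * (e k + γ * b k)) / (k + 1)) := by
        rw [div_mul_eq_mul_div, le_div_iff₀' hg]; exact hf k
    _ ≤ γ / (1 - γ) * ((c + 2 * γ * (M - q) + (k + 1) * (2 * ε + 2 * γ * q)) / (k + 1)) :=
        mul_le_mul_of_nonneg_left (div_le_div_of_nonneg_right hY hn.le) (div_nonneg hγ0 hg.le)
    _ = 2 * γ / (1 - γ) ^ 2 * ε + γ / (1 - γ) * (c + 2 * γ * (M - q)) / (k + 1) := by
        rw [hKε]; field_simp; ring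

lemma limsup_le_of_contraction {γ c D : ℝ} {f b e : ℕ → ℝ} (hγ0 : 0 ≤ γ) (hγ1 : γ < 1)
    (hf0 : ∀ k, 0 ≤ f k) (he : BddAbove (Set.range fun k : ℕ => e k / ((k : ℝ) + 1)))
    (hb : ∀ k, b (k + 1) ≤ γ * b k + (D + e k))
    (hf : ∀ k, (1 - γ) * f (k + 1) ≤ γ * ((c + 2 * (e k + γ * b k)) / (k + 1))) :
    limsup f atTop ≤ 2 * γ / (1 - γ) ^ 2 * limsup (fun k : ℕ => e k / ((k : ℝ) + 1)) atTop :=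
  le_const_mul_of_forall_gt fun ε hε =>
    limsup_le_of_contraction_of_eventually_le hγ0 hγ1 hf0 hb hf <|
      (eventually_lt_of_limsup_lt hε he.isBoundedUnder_of_range).mono fun k hk => by
        rw [div_lt_iff₀ (by positivity)] at hk; linarith

end Asymptotics

section MDP

lemma polApply_sub [Fintype A] (pol Q Q' : X → A → ℝ) (x : X) :
    polApply pol (fun x a => Q x a - Q' x a) x = polApply pol Q x - polApply pol Q' x := by
  simp only [polApply, mul_sub, sum_sub_distrib]

variable [Fintype X]

noncomputable def nextValue (P : X → A → X → ℝ) : (X → ℝ) →ₗ[ℝ] X → A → ℝ where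
  toFun V x a := ∑ x', P x a x' * V x'
  map_add' V W := by ext x a; simp only [Pi.add_apply, mul_add, sum_add_distrib]
  map_smul' c V := by
    ext x a
    simp only [Pi.smul_apply, smul_eq_mul, RingHom.id_apply, mul_sum]
    exact sum_congr rfl fun _ _ => mul_left_comm _ _ _

lemma nextValue_apply (P : X → A → X → ℝ) (V : X → ℝ) (x : X) (a : A) :
    nextValue P V x a = ∑ x', P x a x' * V x' := rfl

lemma abs_nextValue_le {P : X → A → X → ℝ} (hP : ∀ x a, P x a ∈ stdSimplex ℝ X) {V : X → ℝ}
    {m : ℝ} (hV : ∀ x', |V x'| ≤ m) (x : X) (a : A) : |nextValue P V x a| ≤ m :=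
  abs_sum_mul_le_of_mem_stdSimplex (hP x a) hV

variable [Fintype A]

lemma bellman_apply (P : X → A → X → ℝ) (r : X → A → ℝ) (γ : ℝ) (pol Q : X → A → ℝ)
    (x : X) (a : A) :
    bellman P r γ pol Q x a = r x a + γ * nextValue P (polApply pol Q) x a := by
  simp only [bellman, nextValue_apply, polApply, mul_sum, mul_assoc]

variable [Nonempty A]

noncomputable def maxValue (Q : X → A → ℝ) (x : X) : ℝ :=
  univ.sup' univ_nonempty (Q x)

lemma bellmanOpt_apply (P : X → A → X → ℝ) (r : X → A → ℝ) (γ : ℝ) (Q : X → A → ℝ)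
    (x : X) (a : A) :
    bellmanOpt P r γ Q x a = r x a + γ * nextValue P (maxValue Q) x a := rfl

variable [Nonempty X]

lemma abs_le_supNorm (Q : X → A → ℝ) (x : X) (a : A) : |Q x a| ≤ supNorm Q :=
  le_sup' (fun p : X × A => |Q p.1 p.2|) (mem_univ (x, a))

lemma supNorm_le {Q : X → A → ℝ} {m : ℝ} (h : ∀ x a, |Q x a| ≤ m) : supNorm Q ≤ m :=
  sup'_le _ _ fun p _ => h p.1 p.2

lemma supNorm_nonneg (Q : X → A → ℝ) : 0 ≤ supNorm Q :=
  (abs_nonneg _).trans (abs_le_supNorm Q (Classical.arbitrary X) (Classical.arbitrary A))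

variable {P : X → A → X → ℝ} {r : X → A → ℝ} {γ : ℝ} {pol Qstar Qpi : X → A → ℝ}

/-- Combine `Q* - Q^π = γ P (V* - π Q^π)` with `V* - π Q^π = (V* - π Q*) + π (Q* - Q^π)`. -/
lemma supNorm_sub_le_of_greedy_gap_le (hP : ∀ x a, P x a ∈ stdSimplex ℝ X) (hγ0 : 0 ≤ γ)
    (hpol : ∀ x, pol x ∈ stdSimplex ℝ A) (hQstar : bellmanOpt P r γ Qstar = Qstar)
    (hQpi : bellman P r γ pol Qpi = Qpi) {δ : ℝ}
    (hgap : ∀ x, maxValue Qstar x - polApply pol Qstar x ≤ δ) :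
    (1 - γ) * supNorm (fun x a => Qstar x a - Qpi x a) ≤ γ * δ := by
  set Δ := supNorm (fun x a => Qstar x a - Qpi x a)
  have hV : ∀ x, |(maxValue Qstar - polApply pol Qpi) x| ≤ δ + Δ := fun x => by
    have h₀ : polApply pol Qstar x ≤ maxValue Qstar x :=
      sum_mul_le_sup'_of_mem_stdSimplex (hpol x) _
    have h₁ : |polApply pol Qstar x - polApply pol Qpi x| ≤ Δ := by
      rw [← polApply_sub]
      exact abs_sum_mul_le_of_mem_stdSimplex (hpol x) fun a =>
        abs_le_supNorm (fun x a => Qstar x a - Qpi x a) x a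
    rw [Pi.sub_apply, abs_le]
    constructor <;> linarith [hgap x, (abs_le.1 h₁).1, (abs_le.1 h₁).2]
  have hdiff : ∀ x a, Qstar x a - Qpi x a =
      γ * nextValue P (maxValue Qstar - polApply pol Qpi) x a := fun x a => by
    have h₁ := congrFun₂ hQstar x a
    have h₂ := congrFun₂ hQpi x a
    rw [bellmanOpt_apply] at h₁
    rw [bellman_apply] at h₂
    rw [map_sub, Pi.sub_apply, Pi.sub_apply]
    linarith
  have hΔ : Δ ≤ γ * (δ + Δ) := supNorm_le fun x a => by
    rw [hdiff, abs_mul, abs_of_nonneg hγ0]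
    exact mul_le_mul_of_nonneg_left (abs_nextValue_le hP hV x a) hγ0
  linarith

end MDP

section DPP

variable [Fintype A] {P : X → A → X → ℝ} {r : X → A → ℝ} {γ η : ℝ}
  {ε E Ψ pol : ℕ → X → A → ℝ} {Qstar : X → A → ℝ}

lemma softmaxPol_apply (η : ℝ) (Q : X → A → ℝ) (x : X) :
    softmaxPol η Q x = softmax η (Q x) := rfl

noncomputable def cumPolValue (pol Ψ : ℕ → X → A → ℝ) (k : ℕ) : X → ℝ :=
  ∑ j ∈ range (k + 1), polApply (pol j) (Ψ j)

lemma cumPolValue_succ (pol Ψ : ℕ → X → A → ℝ) (k : ℕ) :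
    cumPolValue pol Ψ (k + 1) = cumPolValue pol Ψ k + polApply (pol (k + 1)) (Ψ (k + 1)) :=
  sum_range_succ _ _

variable [Fintype X]

def IsApproxDPP (P : X → A → X → ℝ) (r : X → A → ℝ) (γ : ℝ) (pol ε Ψ : ℕ → X → A → ℝ) : Prop :=
  ∀ k x a, Ψ (k + 1) x a =
    Ψ k x a + bellman P r γ (pol k) (Ψ k) x a - polApply (pol k) (Ψ k) x + ε k x a

lemma dpp_succ_eq_unrolled (hΨ : IsApproxDPP P r γ pol ε Ψ)
    (k : ℕ) (x : X) (a : A) :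
    Ψ (k + 1) x a = Ψ 0 x a + ∑ j ∈ range (k + 1), ε j x a +
      ((k + 1) * r x a + γ * nextValue P (cumPolValue pol Ψ k) x a) - cumPolValue pol Ψ k x := by
  induction k with
  | zero => simp [hΨ 0 x a, bellman_apply, cumPolValue]; ring
  | succ k ih =>
    rw [hΨ (k + 1) x a, ih, bellman_apply, cumPolValue_succ, map_add, sum_range_succ _ (k + 1)]
    simp only [Pi.add_apply]
    push_cast
    ring

variable [Nonempty X] [Nonempty A]

noncomputable def dppDeviation (pol Ψ : ℕ → X → A → ℝ) (Qstar : X → A → ℝ) (k : ℕ) : ℝ :=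
  supNorm fun x (_ : A) => cumPolValue pol Ψ k x - (k + 1) * maxValue Qstar x

lemma abs_cumPolValue_sub_le_dppDeviation (pol Ψ : ℕ → X → A → ℝ) (Qstar : X → A → ℝ)
    (k : ℕ) (x : X) :
    |cumPolValue pol Ψ k x - (k + 1) * maxValue Qstar x| ≤ dppDeviation pol Ψ Qstar k :=
  abs_le_supNorm (fun x (_ : A) => cumPolValue pol Ψ k x - (k + 1) * maxValue Qstar x) x
    (Classical.arbitrary A)

lemma abs_dpp_succ_sub_le (hP : ∀ x a, P x a ∈ stdSimplex ℝ X) (hγ0 : 0 ≤ γ)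
    (hQstar : bellmanOpt P r γ Qstar = Qstar) (hΨ : IsApproxDPP P r γ pol ε Ψ)
    (hE : ∀ k x a, E k x a = ∑ j ∈ range (k + 1), ε j x a) (k : ℕ) (x : X) (a : A) :
    |Ψ (k + 1) x a - ((k + 1) * Qstar x a - cumPolValue pol Ψ k x)| ≤
      supNorm (Ψ 0) + supNorm (E k) + γ * dppDeviation pol Ψ Qstar k := by
  set S := cumPolValue pol Ψ k
  set dev := nextValue P (S - ((k : ℝ) + 1) • maxValue Qstar) x a
  have hQ := congrFun₂ hQstar x a
  rw [bellmanOpt_apply] at hQ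
  have hdev : |dev| ≤ dppDeviation pol Ψ Qstar k :=
    abs_nextValue_le hP (abs_cumPolValue_sub_le_dppDeviation pol Ψ Qstar k) x a
  have key : Ψ (k + 1) x a - ((k + 1) * Qstar x a - S x) = Ψ 0 x a + E k x a + γ * dev := by
    simp only [dev, dpp_succ_eq_unrolled hΨ, hE, map_sub, map_smul, Pi.sub_apply,
      Pi.smul_apply, smul_eq_mul]
    linear_combination ((k : ℝ) + 1) * hQ
  rw [key]
  refine (abs_add_three _ _ _).trans ?_
  rw [abs_mul, abs_of_nonneg hγ0]
  gcongr
  exacts [abs_le_supNorm _ x a, abs_le_supNorm _ x a]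

lemma dppDeviation_succ_le (hP : ∀ x a, P x a ∈ stdSimplex ℝ X) (hγ0 : 0 ≤ γ) (hη : 0 < η)
    (hpol : ∀ k, pol k = softmaxPol η (Ψ k)) (hQstar : bellmanOpt P r γ Qstar = Qstar)
    (hΨ : IsApproxDPP P r γ pol ε Ψ)
    (hE : ∀ k x a, E k x a = ∑ j ∈ range (k + 1), ε j x a) (k : ℕ) :
    dppDeviation pol Ψ Qstar (k + 1) ≤ γ * dppDeviation pol Ψ Qstar k +
      (supNorm (fun x (_ : A) => maxValue Qstar x) + supNorm (Ψ 0) + Fintype.card A / η +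
        supNorm (E k)) := supNorm_le fun x a => by
  have hstep := abs_sum_softmax_mul_sub_sup'_le hη (abs_dpp_succ_sub_le hP hγ0 hQstar hΨ hE k x)
  rw [sup'_mul_sub (by positivity)] at hstep
  have hV := abs_le_supNorm (fun x (_ : A) => maxValue Qstar x) x a
  have key : cumPolValue pol Ψ (k + 1) x - ((k + 1 : ℕ) + 1) * maxValue Qstar x =
      (∑ a, softmax η (Ψ (k + 1) x) a * Ψ (k + 1) x a -
        ((k + 1) * maxValue Qstar x - cumPolValue pol Ψ k x)) - maxValue Qstar x := by
    rw [cumPolValue_succ, Pi.add_apply, hpol, polApply, softmaxPol_apply]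
    push_cast
    ring
  rw [key]
  refine (abs_sub _ _).trans ?_
  simp only [maxValue] at hV hstep ⊢
  linarith

lemma dpp_performance_loss_le (hP : ∀ x a, P x a ∈ stdSimplex ℝ X) (hγ0 : 0 ≤ γ) (hη : 0 < η)
    (hpol : ∀ k, pol k = softmaxPol η (Ψ k)) (hQstar : bellmanOpt P r γ Qstar = Qstar)
    (hΨ : IsApproxDPP P r γ pol ε Ψ)
    (hE : ∀ k x a, E k x a = ∑ j ∈ range (k + 1), ε j x a) {Qpi : ℕ → X → A → ℝ}
    (hQpi : ∀ k, bellman P r γ (pol k) (Qpi k) = Qpi k) (k : ℕ) :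
    (1 - γ) * supNorm (fun x a => Qstar x a - Qpi (k + 1) x a) ≤
      γ * ((Fintype.card A / η + 2 * supNorm (Ψ 0) +
        2 * (supNorm (E k) + γ * dppDeviation pol Ψ Qstar k)) / (k + 1)) := by
  have hpolk : ∀ x, pol (k + 1) x ∈ stdSimplex ℝ A := fun x => by
    rw [hpol, softmaxPol_apply]; exact softmax_mem_stdSimplex η _
  refine supNorm_sub_le_of_greedy_gap_le hP hγ0 hpolk hQstar (hQpi (k + 1)) fun x => ?_
  have hgap := sup'_sub_le_sum_softmax_mul_of_abs_sub_le hη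
    (abs_dpp_succ_sub_le hP hγ0 hQstar hΨ hE k x)
  rw [sup'_mul_sub (by positivity), sum_mul_mul_sub_of_mem_stdSimplex
    (softmax_mem_stdSimplex η _)] at hgap
  rw [le_div_iff₀ (by positivity), hpol, polApply, softmaxPol_apply]
  simp only [maxValue]
  linarith

end DPP

theorem approx_dpp_asymptotic_bound_general
    {X A : Type*} [Fintype X] [Fintype A] [Nonempty X] [Nonempty A]
    (P : X → A → X → ℝ) (hP0 : ∀ x a x', 0 ≤ P x a x') (hP1 : ∀ x a, ∑ x', P x a x' = 1)
    (r : X → A → ℝ)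
    (γ : ℝ) (hγ0 : 0 ≤ γ) (hγ1 : γ < 1)
    (η : ℝ) (hη : 0 < η)
    (ε : ℕ → X → A → ℝ)
    (E : ℕ → X → A → ℝ)
    (hE : ∀ k x a, E k x a = ∑ j ∈ Finset.range (k + 1), ε j x a)
    (hbdd : BddAbove (Set.range fun k : ℕ => supNorm (E k) / ((k : ℝ) + 1)))
    (εbar : ℝ)
    (hεbar : εbar = Filter.limsup (fun k : ℕ => supNorm (E k) / ((k : ℝ) + 1)) Filter.atTop)
    (Ψ : ℕ → X → A → ℝ)
    (pol : ℕ → X → A → ℝ) (hpol : ∀ k, pol k = softmaxPol η (Ψ k))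
    (hΨ : ∀ k x a, Ψ (k + 1) x a =
      Ψ k x a + bellman P r γ (pol k) (Ψ k) x a - polApply (pol k) (Ψ k) x + ε k x a)
    (Qstar : X → A → ℝ) (hQstar : bellmanOpt P r γ Qstar = Qstar)
    (Qpi : ℕ → X → A → ℝ) (hQpi : ∀ k, bellman P r γ (pol k) (Qpi k) = Qpi k) :
    Filter.limsup (fun k : ℕ => supNorm (fun x a => Qstar x a - Qpi k x a)) Filter.atTop ≤
      2 * γ / (1 - γ) ^ 2 * εbar := by
  have hP : ∀ x a, P x a ∈ stdSimplex ℝ X := fun x a => ⟨hP0 x a, hP1 x a⟩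
  subst hεbar
  exact limsup_le_of_contraction hγ0 hγ1 (fun k => supNorm_nonneg _) hbdd
    (dppDeviation_succ_le hP hγ0 hη hpol hQstar hΨ hE)
    (dpp_performance_loss_le hP hγ0 hη hpol hQstar hΨ hE hQpi)

/-- Corollary 2 of the paper: asymptotic `ℓ∞`-norm performance-loss bound of
approximate DPP in terms of the average accumulated error. -/
theorem approx_dpp_asymptotic_bound
    {X A : Type*} [Fintype X] [Fintype A] [Nonempty X] [Nonempty A]
    (P : X → A → X → ℝ) (hP0 : ∀ x a x', 0 ≤ P x a x') (hP1 : ∀ x a, ∑ x', P x a x' = 1)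
    (r : X → A → ℝ) (Rmax : ℝ) (hR : 0 < Rmax) (hr : ∀ x a, |r x a| ≤ Rmax)
    (γ : ℝ) (hγ0 : 0 ≤ γ) (hγ1 : γ < 1)
    (Vmax : ℝ) (hV : Vmax = Rmax / (1 - γ))
    (η : ℝ) (hη : 0 < η)
    (ε : ℕ → X → A → ℝ)
    (E : ℕ → X → A → ℝ)
    (hE : ∀ k x a, E k x a = ∑ j ∈ Finset.range (k + 1), ε j x a)
    (hbdd : BddAbove (Set.range fun k : ℕ => supNorm (E k) / ((k : ℝ) + 1)))
    (εbar : ℝ)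
    (hεbar : εbar = Filter.limsup (fun k : ℕ => supNorm (E k) / ((k : ℝ) + 1)) Filter.atTop)
    (Ψ : ℕ → X → A → ℝ) (hΨ0 : supNorm (Ψ 0) ≤ Vmax)
    (pol : ℕ → X → A → ℝ) (hpol : ∀ k, pol k = softmaxPol η (Ψ k))
    (hΨ : ∀ k x a, Ψ (k + 1) x a =
      Ψ k x a + bellman P r γ (pol k) (Ψ k) x a - polApply (pol k) (Ψ k) x + ε k x a)
    (Qstar : X → A → ℝ) (hQstar : bellmanOpt P r γ Qstar = Qstar)
    (Qpi : ℕ → X → A → ℝ) (hQpi : ∀ k, bellman P r γ (pol k) (Qpi k) = Qpi k) :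
    Filter.limsup (fun k : ℕ => supNorm (fun x a => Qstar x a - Qpi k x a)) Filter.atTop ≤
      2 * γ / (1 - γ) ^ 2 * εbar :=
  approx_dpp_asymptotic_bound_general P hP0 hP1 r γ hγ0 hγ1 η hη ε E hE hbdd εbar hεbar Ψ pol hpol
    hΨ Qstar hQstar Qpi hQpi
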